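/- Consider the 5-simplex on vertices {1,...,6} and the Pachner move 3–3 configurations: the left side consists of the three pentachora L = {12345, 12346, 12356} with interior tetrahedra {1234, 1235, 1236}, the right side of the three pentachora R = {12456, 13456, 23456} with interior tetrahedra {1456, 2456, 3456}, and the common boundary tetrahedra are B = {2345, 1345, 1245, 2346, 1346, 1246, 2356, 1356, 1256}. A permitted ℤ-coloring of a side is an assignment (x_t, y_t) ∈ ℤ × ℤ to every tetrahedron t that is a face of its pentachora, such that 𝐲_u = ℛ𝐱_u for each pentachoron u of that side. Then the map restricting a permitted coloring of the left side to B is injective, the map restricting a permitted coloring of the right side to B is injective, and the two maps have the same image; hence permitted colorings of the two sides agreeing on B are in bijective correspondence. -/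

import Mathlib

/-!
Each side imposes 15 linear equations on the 24 integers carried by its 12 tetrahedra.
Eliminating the six unknowns of the three interior tetrahedra expresses them through
boundary values (`fillLeft`, `fillRight`) and leaves, on both sides, the same nine
linear constraints on the boundary. Hence a permitted coloring is recovered from its
boundary by filling in the interior, and filling in the interior of the boundary of a
permitted coloring of one side yields a permitted coloring of the other side.
-/

/- The Pachner move 3–3 inside the 5-simplex with vertex set `Fin 6`
   (vertices 1,…,6 of the paper are 0,…,5 here). -/

/-- The matrix ℛ from the paper. -/
def Rmat : Matrix (Fin 5) (Fin 5) ℤ :=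
  !![0, -2, 1, 1, -2;
     0, -1, 0, 1, -1;
     -1, 2, -2, 0, 1;
     -1, 3, -2, -1, 2;
     0, 1, -1, 0, 0]

/-- The five tetrahedral faces `jklm, iklm, ijlm, ijkm, ijkl` of the
pentachoron `ijklm = abcde`. -/
def pentFaces (a b c d e : Fin 6) : Fin 5 → Finset (Fin 6) :=
  ![{b, c, d, e}, {a, c, d, e}, {a, b, d, e}, {a, b, c, e}, {a, b, c, d}]

/-- A ℤ-coloring `t ↦ (x_t, y_t)` is permitted on the pentachoron `abcde`
iff `𝐲_u = ℛ 𝐱_u`, where ℛ acts with integer coefficients. -/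
def IsPermitted (f : Finset (Fin 6) → ℤ × ℤ) (a b c d e : Fin 6) : Prop :=
  ∀ i : Fin 5,
    (f (pentFaces a b c d e i)).2 =
      ∑ j : Fin 5, Rmat i j * (f (pentFaces a b c d e j)).1

/-- Permitted coloring of the left side of the move 3–3: the pentachora
`12345, 12346, 12356`. -/
def PermittedLeft (f : Finset (Fin 6) → ℤ × ℤ) : Prop :=
  IsPermitted f 0 1 2 3 4 ∧ IsPermitted f 0 1 2 3 5 ∧ IsPermitted f 0 1 2 4 5

/-- Permitted coloring of the right side of the move 3–3: the pentachora
`12456, 13456, 23456`. -/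
def PermittedRight (f : Finset (Fin 6) → ℤ × ℤ) : Prop :=
  IsPermitted f 0 1 3 4 5 ∧ IsPermitted f 0 2 3 4 5 ∧ IsPermitted f 1 2 3 4 5

/-- The common boundary tetrahedra
`B = {2345, 1345, 1245, 2346, 1346, 1246, 2356, 1356, 1256}`. -/
def Bdry : Finset (Finset (Fin 6)) :=
  {{1, 2, 3, 4}, {0, 2, 3, 4}, {0, 1, 3, 4},
   {1, 2, 3, 5}, {0, 2, 3, 5}, {0, 1, 3, 5},
   {1, 2, 4, 5}, {0, 2, 4, 5}, {0, 1, 4, 5}}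

/-- The tetrahedra that are faces of the left-side pentachora: the boundary
ones together with the interior tetrahedra `1234, 1235, 1236`. -/
def FacesLeft : Finset (Finset (Fin 6)) :=
  Bdry ∪ {{0, 1, 2, 3}, {0, 1, 2, 4}, {0, 1, 2, 5}}

/-- The tetrahedra that are faces of the right-side pentachora: the boundary
ones together with the interior tetrahedra `1456, 2456, 3456`. -/
def FacesRight : Finset (Finset (Fin 6)) :=
  Bdry ∪ {{0, 3, 4, 5}, {1, 3, 4, 5}, {2, 3, 4, 5}}

theorem isPermitted_iff (f : Finset (Fin 6) → ℤ × ℤ) (a b c d e : Fin 6) :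
    IsPermitted f a b c d e ↔
      ((f {b, c, d, e}).2 = -2 * (f {a, c, d, e}).1 + (f {a, b, d, e}).1 + (f {a, b, c, e}).1
          - 2 * (f {a, b, c, d}).1 ∧
        (f {a, c, d, e}).2 = -(f {a, c, d, e}).1 + (f {a, b, c, e}).1 - (f {a, b, c, d}).1 ∧
        (f {a, b, d, e}).2 = -(f {b, c, d, e}).1 + 2 * (f {a, c, d, e}).1
          - 2 * (f {a, b, d, e}).1 + (f {a, b, c, d}).1 ∧
        (f {a, b, c, e}).2 = -(f {b, c, d, e}).1 + 3 * (f {a, c, d, e}).1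
          - 2 * (f {a, b, d, e}).1 - (f {a, b, c, e}).1 + 2 * (f {a, b, c, d}).1 ∧
        (f {a, b, c, d}).2 = (f {a, c, d, e}).1 - (f {a, b, d, e}).1) := by
  simp [IsPermitted, Fin.forall_fin_succ, Fin.sum_univ_five, pentFaces, Rmat, sub_eq_add_neg]

def fillLeft (b : Finset (Fin 6) → ℤ × ℤ) : Finset (Fin 6) → ℤ × ℤ :=
  Function.update (Function.update (Function.update b
    {0, 1, 2, 3}
      ((b {0, 1, 3, 5}).1 - (b {0, 2, 3, 5}).1 + (b {0, 2, 3, 5}).2 - (b {1, 2, 3, 5}).2,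
        (b {0, 2, 3, 4}).1 - (b {0, 1, 3, 4}).1))
    {0, 1, 2, 4}
      ((b {0, 1, 3, 4}).1 + (b {0, 2, 3, 4}).2 + (b {0, 2, 3, 5}).2 - (b {1, 2, 3, 5}).2,
        (b {0, 2, 4, 5}).1 - (b {0, 1, 4, 5}).1))
    {0, 1, 2, 5}
      ((b {0, 1, 4, 5}).1 + 2 * (b {0, 2, 4, 5}).2 - (b {1, 2, 4, 5}).2,
        (b {0, 1, 4, 5}).2 - (b {0, 2, 4, 5}).2)

def fillRight (b : Finset (Fin 6) → ℤ × ℤ) : Finset (Fin 6) → ℤ × ℤ :=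
  Function.update (Function.update (Function.update b
    {0, 3, 4, 5}
      ((b {0, 2, 4, 5}).1 + (b {0, 2, 3, 4}).2,
        (b {0, 1, 4, 5}).2 - (b {0, 1, 3, 5}).2))
    {1, 3, 4, 5}
      ((b {1, 2, 4, 5}).1 + (b {1, 2, 3, 4}).2,
        (b {1, 2, 4, 5}).2 - (b {1, 2, 3, 5}).2))
    {2, 3, 4, 5}
      ((b {1, 2, 3, 5}).1 - (b {1, 2, 4, 5}).1 + (b {1, 2, 3, 4}).2 + (b {1, 2, 3, 5}).2
          - 2 * (b {1, 2, 4, 5}).2,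
        (b {0, 1, 4, 5}).2 - (b {0, 1, 3, 5}).2 - (b {0, 2, 3, 4}).1 - (b {0, 2, 3, 4}).2)

theorem fillLeft_of_mem_bdry (b : Finset (Fin 6) → ℤ × ℤ) {t : Finset (Fin 6)}
    (ht : t ∈ Bdry) : fillLeft b t = b t := by
  simp only [Bdry, Finset.mem_insert, Finset.mem_singleton] at ht
  rcases ht with rfl | rfl | rfl | rfl | rfl | rfl | rfl | rfl | rfl <;>
    simp +decide [fillLeft]

theorem fillLeft_congr {b b' : Finset (Fin 6) → ℤ × ℤ} (h : ∀ t ∈ Bdry, b t = b' t) :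
    ∀ t ∈ FacesLeft, fillLeft b t = fillLeft b' t := by
  intro t ht
  simp only [FacesLeft, Finset.mem_union, Finset.mem_insert, Finset.mem_singleton] at ht
  rcases ht with hB | rfl | rfl | rfl
  · rw [fillLeft_of_mem_bdry b hB, fillLeft_of_mem_bdry b' hB, h t hB]
  all_goals simp +decide [fillLeft, h]

theorem PermittedLeft.fillLeft_eq {f : Finset (Fin 6) → ℤ × ℤ} (hf : PermittedLeft f) :
    fillLeft f = f := by
  simp only [PermittedLeft, isPermitted_iff] at hf
  obtain ⟨⟨_, _, _, _, _⟩, ⟨_, _, _, _, _⟩, ⟨_, _, _, _, _⟩⟩ := hf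
  funext t
  simp only [fillLeft, Function.update_apply]
  split_ifs
  all_goals first | rfl | (subst t; ext <;> dsimp only <;> linarith)

theorem PermittedRight.permittedLeft_fillLeft {f : Finset (Fin 6) → ℤ × ℤ}
    (hf : PermittedRight f) : PermittedLeft (fillLeft f) := by
  simp only [PermittedRight, isPermitted_iff] at hf
  obtain ⟨⟨_, _, _, _, _⟩, ⟨_, _, _, _, _⟩, ⟨_, _, _, _, _⟩⟩ := hf
  simp +decide only [PermittedLeft, isPermitted_iff, fillLeft, Function.update_apply, if_true,
    if_false]
  and_intros <;> first | trivial | linarith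

theorem fillRight_of_mem_bdry (b : Finset (Fin 6) → ℤ × ℤ) {t : Finset (Fin 6)}
    (ht : t ∈ Bdry) : fillRight b t = b t := by
  simp only [Bdry, Finset.mem_insert, Finset.mem_singleton] at ht
  rcases ht with rfl | rfl | rfl | rfl | rfl | rfl | rfl | rfl | rfl <;>
    simp +decide [fillRight]

theorem fillRight_congr {b b' : Finset (Fin 6) → ℤ × ℤ} (h : ∀ t ∈ Bdry, b t = b' t) :
    ∀ t ∈ FacesRight, fillRight b t = fillRight b' t := by
  intro t ht
  simp only [FacesRight, Finset.mem_union, Finset.mem_insert, Finset.mem_singleton] at ht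
  rcases ht with hB | rfl | rfl | rfl
  · rw [fillRight_of_mem_bdry b hB, fillRight_of_mem_bdry b' hB, h t hB]
  all_goals simp +decide [fillRight, h]

theorem PermittedRight.fillRight_eq {f : Finset (Fin 6) → ℤ × ℤ} (hf : PermittedRight f) :
    fillRight f = f := by
  simp only [PermittedRight, isPermitted_iff] at hf
  obtain ⟨⟨_, _, _, _, _⟩, ⟨_, _, _, _, _⟩, ⟨_, _, _, _, _⟩⟩ := hf
  funext t
  simp only [fillRight, Function.update_apply]
  split_ifs
  all_goals first | rfl | (subst t; ext <;> dsimp only <;> linarith)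

theorem PermittedLeft.permittedRight_fillRight {f : Finset (Fin 6) → ℤ × ℤ}
    (hf : PermittedLeft f) : PermittedRight (fillRight f) := by
  simp only [PermittedLeft, isPermitted_iff] at hf
  obtain ⟨⟨_, _, _, _, _⟩, ⟨_, _, _, _, _⟩, ⟨_, _, _, _, _⟩⟩ := hf
  simp +decide only [PermittedRight, isPermitted_iff, fillRight, Function.update_apply, if_true,
    if_false]
  and_intros <;> first | trivial | linarith

/-- For the Pachner move 3–3: restriction to the boundary `B` is injective on
permitted colorings of the left side, injective on permitted colorings of the
right side, and the two restriction maps have the same image; hence permitted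
colorings of the two sides agreeing on `B` are in bijective correspondence. -/
theorem pachner_three_three :
    (∀ f g : Finset (Fin 6) → ℤ × ℤ, PermittedLeft f → PermittedLeft g →
      (∀ t ∈ Bdry, f t = g t) → ∀ t ∈ FacesLeft, f t = g t) ∧
    (∀ f g : Finset (Fin 6) → ℤ × ℤ, PermittedRight f → PermittedRight g →
      (∀ t ∈ Bdry, f t = g t) → ∀ t ∈ FacesRight, f t = g t) ∧
    (∀ b : Finset (Fin 6) → ℤ × ℤ,
      (∃ f, PermittedLeft f ∧ ∀ t ∈ Bdry, f t = b t) ↔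
      (∃ f, PermittedRight f ∧ ∀ t ∈ Bdry, f t = b t)) := by
  refine ⟨fun f g hf hg hfg t ht => ?_, fun f g hf hg hfg t ht => ?_, fun b => ⟨?_, ?_⟩⟩
  · rw [← hf.fillLeft_eq, ← hg.fillLeft_eq]
    exact fillLeft_congr hfg t ht
  · rw [← hf.fillRight_eq, ← hg.fillRight_eq]
    exact fillRight_congr hfg t ht
  · rintro ⟨f, hf, hfb⟩
    exact ⟨fillRight f, hf.permittedRight_fillRight,
      fun t ht => (fillRight_of_mem_bdry f ht).trans (hfb t ht)⟩
  · rintro ⟨f, hf, hfb⟩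
    exact ⟨fillLeft f, hf.permittedLeft_fillLeft,
      fun t ht => (fillLeft_of_mem_bdry f ht).trans (hfb t ht)⟩
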